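/- Let ξ ∈ C²(S¹;ℝ^d) be a solution of the stationary equation ∂_s(σ ∂_s ξ) + ξ = 0 with |∂_s ξ| ≡ 1, where σ ∈ C²(S¹) satisfies ∂_{ss}σ − σ|∂_{ss}ξ|² = −1 and σ > 0. Then ξ is a plane curve (ξ, ∂_s ξ, ∂_{ss}ξ all lie in a fixed 2-plane), its curvature k satisfies σ² k = const, and k(s) > 0 for all s ∈ S¹. -/

import Mathlib

/-!
Expanding the stationary equation gives `σ ξ'' = -ξ - σ' ξ'`, a linear second-order ODE with
continuous coefficients. The orthogonal projection of `(ξ, ξ')` onto the complement of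
`span {ξ 0, ξ' 0}` solves the same linear system with zero initial data, hence vanishes: the
curve is planar.

The vector `σ² ξ'' = -σ ξ - σ σ' ξ'` is differentiable, and since `ξ' ⟂ ξ''` (constant speed) and
`⟪ξ, ξ''⟫ = -σ ‖ξ''‖²`, its derivative is orthogonal to it; so `σ² ‖ξ''‖` is constant. Were the
constant zero, `ξ` would be affine with nonzero velocity, which a periodic curve cannot be.
-/

open Set Function

section NormedSpace

variable {F : Type*} [NormedAddCommGroup F] [NormedSpace ℝ F]

theorem linear_ODE_solution_eq_zero {A : ℝ → F →L[ℝ] F} (hA : Continuous A) {x : ℝ → F}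
    (hx : ∀ t, HasDerivAt x (A t (x t)) t) {t₀ : ℝ} (h₀ : x t₀ = 0) (t : ℝ) : x t = 0 := by
  set a := min t t₀ - 1
  set b := max t t₀ + 1
  have ht : t ∈ Icc a b := ⟨by linarith [min_le_left t t₀], by linarith [le_max_left t t₀]⟩
  have ht₀ : t₀ ∈ Ioo a b := ⟨by linarith [min_le_right t t₀], by linarith [le_max_right t t₀]⟩
  obtain ⟨C, hC⟩ := isCompact_Icc.exists_bound_of_continuousOn (hA.continuousOn (s := Icc a b))
  have hlip : ∀ r ∈ Ioo a b, LipschitzOnWith C.toNNReal (A r) univ := fun r hr =>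
    have hr : ‖A r‖ ≤ C := hC r (Ioo_subset_Icc_self hr)
    ((A r).lipschitz.weaken
      ((Real.le_toNNReal_iff_coe_le ((norm_nonneg _).trans hr)).mpr hr)).lipschitzOnWith
  exact ODE_solution_unique_of_mem_Icc (g := 0) hlip ht₀
    (HasDerivAt.continuousOn fun r _ => hx r) (fun r _ => hx r) (fun _ _ => trivial)
    continuousOn_const (fun r _ => by simp)
    (fun _ _ => trivial) h₀ ht

theorem linear_second_order_ODE_solution_eq_zero {a b : ℝ → ℝ} (ha : Continuous a)
    (hb : Continuous b) {y y' : ℝ → F} (hy : ∀ t, HasDerivAt y (y' t) t)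
    (hy' : ∀ t, HasDerivAt y' (a t • y t + b t • y' t) t) {t₀ : ℝ} (h₀ : y t₀ = 0)
    (h₀' : y' t₀ = 0) (t : ℝ) : y t = 0 ∧ y' t = 0 := by
  set A : ℝ → F × F →L[ℝ] F × F := fun r =>
    (ContinuousLinearMap.snd ℝ F F).prod
      (a r • ContinuousLinearMap.fst ℝ F F + b r • ContinuousLinearMap.snd ℝ F F)
  have hA : Continuous A :=
    (ContinuousLinearMap.prodₗᵢ ℝ).continuous.comp (continuous_const.prodMk (by fun_prop))
  exact Prod.mk_eq_zero.mp <| linear_ODE_solution_eq_zero hA (x := fun r => (y r, y' r))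
    (fun r => (hy r).prodMk (hy' r)) (Prod.mk_eq_zero.mpr ⟨h₀, h₀'⟩) t

theorem Function.Periodic.deriv_eq_zero_of_deriv_deriv_eq_zero {γ : ℝ → F} {T : ℝ}
    (hp : Periodic γ T) (hT : T ≠ 0) (hγ : Differentiable ℝ γ) (hγ' : Differentiable ℝ (deriv γ))
    (h : ∀ t, deriv (deriv γ) t = 0) (t : ℝ) : deriv γ t = 0 := by
  have hconst : ∀ t, deriv γ t = deriv γ 0 := fun t => is_const_of_deriv_eq_zero hγ' h t 0
  have hd : ∀ t, HasDerivAt (fun t => γ t - t • deriv γ 0) 0 t := fun t => by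
    simpa [hconst t] using (hγ t).hasDerivAt.fun_sub ((hasDerivAt_id t).smul_const (deriv γ 0))
  have hdiff := is_const_of_deriv_eq_zero (fun t => (hd t).differentiableAt)
    (fun t => (hd t).deriv) T 0
  rw [show γ T = γ 0 by simpa using hp 0] at hdiff
  rw [hconst t]
  simpa [hT] using hdiff

end NormedSpace

section InnerProductSpace

variable {E : Type*} [NormedAddCommGroup E] [InnerProductSpace ℝ E] {ξ : ℝ → E} {σ : ℝ → ℝ}

local notation "⟪" x ", " y "⟫" => @inner ℝ _ _ x y

theorem mem_of_linear_second_order_ODE {a b : ℝ → ℝ} (ha : Continuous a) (hb : Continuous b)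
    {x x' : ℝ → E} (hx : ∀ t, HasDerivAt x (x' t) t)
    (hx' : ∀ t, HasDerivAt x' (a t • x t + b t • x' t) t) (K : Submodule ℝ E)
    [K.HasOrthogonalProjection] {t₀ : ℝ} (h₀ : x t₀ ∈ K) (h₀' : x' t₀ ∈ K) (t : ℝ) :
    x t ∈ K ∧ x' t ∈ K := by
  set L := Kᗮ.orthogonalProjectionOnto
  have hL : ∀ v, L v = 0 ↔ v ∈ K := fun v => by
    rw [Submodule.orthogonalProjectionOnto_eq_zero_iff, Submodule.orthogonal_orthogonal]
  have hLx := fun t => L.hasFDerivAt.comp_hasDerivAt t (hx t)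
  have hLx' := fun t => L.hasFDerivAt.comp_hasDerivAt t (hx' t)
  simp only [Function.comp_def, map_add, map_smul] at hLx'
  simpa only [hL, Function.comp_apply] using
    linear_second_order_ODE_solution_eq_zero ha hb hLx hLx' ((hL _).mpr h₀) ((hL _).mpr h₀') t

theorem inner_eq_zero_of_norm_eq {γ : ℝ → E} {γ' : E} {s c : ℝ} (hγ : HasDerivAt γ γ' s)
    (hc : ∀ r, ‖γ r‖ = c) : ⟪γ s, γ'⟫ = 0 := by
  have hconst : HasDerivAt (fun r => ⟪γ r, γ r⟫) 0 s := by
    simpa only [real_inner_self_eq_norm_sq, hc] using hasDerivAt_const s (c ^ 2)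
  have h := (hγ.inner ℝ hγ).unique hconst
  linarith [real_inner_comm γ' (γ s)]

theorem norm_eq_of_inner_eq_zero {γ γ' : ℝ → E} (hγ : ∀ s, HasDerivAt γ (γ' s) s)
    (h : ∀ s, ⟪γ s, γ' s⟫ = 0) (s t : ℝ) : ‖γ s‖ = ‖γ t‖ := by
  have hd : ∀ r, HasDerivAt (fun r => ⟪γ r, γ r⟫) 0 r := fun r => by
    simpa only [real_inner_comm (γ r), h, add_zero] using (hγ r).inner ℝ (hγ r)
  have hsq := is_const_of_deriv_eq_zero (fun r => (hd r).differentiableAt)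
    (fun r => (hd r).deriv) s t
  simp only [real_inner_self_eq_norm_sq] at hsq
  exact (sq_eq_sq₀ (norm_nonneg _) (norm_nonneg _)).mp hsq

def IsStationarySolution (σ : ℝ → ℝ) (ξ : ℝ → E) : Prop :=
  ∀ s, deriv (fun r => σ r • deriv ξ r) s + ξ s = 0

namespace IsStationarySolution

theorem expand (hstat : IsStationarySolution σ ξ) (hσ : Differentiable ℝ σ)
    (hξ' : Differentiable ℝ (deriv ξ)) (s : ℝ) :
    deriv σ s • deriv ξ s + σ s • deriv (deriv ξ) s + ξ s = 0 := by
  have h := hstat s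
  rw [deriv_fun_smul (hσ s) (hξ' s)] at h
  linear_combination (norm := module) h

theorem deriv_deriv_eq (hstat : IsStationarySolution σ ξ) (hσ : Differentiable ℝ σ)
    (hξ' : Differentiable ℝ (deriv ξ)) {s : ℝ} (hs : σ s ≠ 0) :
    deriv (deriv ξ) s = (-(σ s)⁻¹) • ξ s + (-(deriv σ s / σ s)) • deriv ξ s := by
  apply smul_right_injective E hs
  simp only [smul_add, smul_smul]
  field_simp
  linear_combination (norm := module) hstat.expand hσ hξ' s

theorem sq_smul_deriv_deriv (hstat : IsStationarySolution σ ξ) (hσ : Differentiable ℝ σ)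
    (hξ' : Differentiable ℝ (deriv ξ)) (s : ℝ) :
    σ s ^ 2 • deriv (deriv ξ) s = -(σ s • ξ s) - (σ s * deriv σ s) • deriv ξ s := by
  linear_combination (norm := module) σ s • hstat.expand hσ hξ' s

theorem sq_mul_norm_deriv_deriv_eq (hstat : IsStationarySolution σ ξ)
    (hσ : Differentiable ℝ σ) (hσ' : Differentiable ℝ (deriv σ)) (hξ : Differentiable ℝ ξ)
    (hξ' : Differentiable ℝ (deriv ξ)) {c : ℝ} (hspeed : ∀ s, ‖deriv ξ s‖ = c) (s t : ℝ) :
    σ s ^ 2 * ‖deriv (deriv ξ) s‖ = σ t ^ 2 * ‖deriv (deriv ξ) t‖ := by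
  have hnorm : ∀ r, ‖σ r ^ 2 • deriv (deriv ξ) r‖ = σ r ^ 2 * ‖deriv (deriv ξ) r‖ := fun r => by
    rw [norm_smul, norm_pow, Real.norm_eq_abs, sq_abs]
  rw [← hnorm, ← hnorm, hstat.sq_smul_deriv_deriv hσ hξ', hstat.sq_smul_deriv_deriv hσ hξ']
  -- `σ² ξ''` is differentiable in this form, although `ξ` is only assumed `C²`.
  have hG := fun r => ((hσ r).hasDerivAt.fun_smul (hξ r).hasDerivAt).fun_neg.fun_sub
    (((hσ r).hasDerivAt.fun_mul (hσ' r).hasDerivAt).fun_smul (hξ' r).hasDerivAt)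
  refine norm_eq_of_inner_eq_zero hG (fun r => ?_) s t
  have hperp : ⟪deriv ξ r, deriv (deriv ξ) r⟫ = 0 :=
    inner_eq_zero_of_norm_eq (hξ' r).hasDerivAt hspeed
  have hradial : ⟪deriv (deriv ξ) r, ξ r⟫ =
      -(σ r * ⟪deriv (deriv ξ) r, deriv (deriv ξ) r⟫) := by
    have h := congrArg (⟪deriv (deriv ξ) r, ·⟫) (hstat.expand hσ hξ' r)
    simp only [inner_add_right, real_inner_smul_right, inner_zero_right,
      real_inner_comm (deriv ξ r), hperp] at h
    linarith
  rw [← hstat.sq_smul_deriv_deriv hσ hξ' r]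
  simp only [real_inner_smul_left, inner_sub_right, inner_neg_right, inner_add_right,
    real_inner_smul_right, real_inner_comm (deriv ξ r), hperp, hradial]
  ring

end IsStationarySolution

end InnerProductSpace

theorem stmt13 (d : ℕ)
    (ξ : ℝ → EuclideanSpace ℝ (Fin d)) (σ : ℝ → ℝ)
    (hξ : ContDiff ℝ 2 ξ) (hσ : ContDiff ℝ 2 σ)
    (hperξ : Function.Periodic ξ 1)
    (hσpos : ∀ s, 0 < σ s)
    (hspeed : ∀ s, ‖deriv ξ s‖ = 1)
    (hstat : ∀ s, deriv (fun r => σ r • deriv ξ r) s + ξ s = 0) :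
    (∃ P : Submodule ℝ (EuclideanSpace ℝ (Fin d)), Module.finrank ℝ P ≤ 2 ∧
      ∀ s, ξ s ∈ P ∧ deriv ξ s ∈ P ∧ deriv (deriv ξ) s ∈ P) ∧
    (∃ c : ℝ, ∀ s, σ s ^ 2 * ‖deriv (deriv ξ) s‖ = c) ∧
    (∀ s, 0 < ‖deriv (deriv ξ) s‖) := by
  have hξ₁ : Differentiable ℝ ξ := hξ.differentiable two_ne_zero
  have hξ₂ : Differentiable ℝ (deriv ξ) := hξ.differentiable_deriv_two
  have hσ₁ : Differentiable ℝ σ := hσ.differentiable two_ne_zero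
  have hσ₂ : Differentiable ℝ (deriv σ) := hσ.differentiable_deriv_two
  have hσ₀ : ∀ s, σ s ≠ 0 := fun s => (hσpos s).ne'
  have hstat : IsStationarySolution σ ξ := hstat
  have hacc : ∀ s, deriv (deriv ξ) s = _ := fun s => hstat.deriv_deriv_eq hσ₁ hξ₂ (hσ₀ s)
  have hconst := hstat.sq_mul_norm_deriv_deriv_eq hσ₁ hσ₂ hξ₁ hξ₂ hspeed
  set P := Submodule.span ℝ (Set.range ![ξ 0, deriv ξ 0])
  have hplane := mem_of_linear_second_order_ODE (hσ.continuous.inv₀ hσ₀).neg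
    ((hσ₂.continuous.div hσ.continuous hσ₀).neg) (fun t => (hξ₁ t).hasDerivAt)
    (fun t => hacc t ▸ (hξ₂ t).hasDerivAt) P (Submodule.subset_span ⟨0, rfl⟩)
    (Submodule.subset_span ⟨1, rfl⟩)
  refine ⟨⟨P, finrank_range_le_card _, fun s => ⟨(hplane s).1, (hplane s).2, ?_⟩⟩,
    ⟨_, fun s => hconst s 0⟩, fun s => ?_⟩
  · rw [hacc s]
    exact P.add_mem (P.smul_mem _ (hplane s).1) (P.smul_mem _ (hplane s).2)
  · refine (norm_nonneg _).lt_of_ne fun hk => ?_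
    have hzero : ∀ t, deriv (deriv ξ) t = 0 := fun t => by
      have h := hconst t s
      rw [← hk, mul_zero] at h
      exact norm_eq_zero.mp ((mul_eq_zero.mp h).resolve_left (pow_ne_zero 2 (hσ₀ t)))
    simpa [hperξ.deriv_eq_zero_of_deriv_deriv_eq_zero one_ne_zero hξ₁ hξ₂ hzero 0] using hspeed 0
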